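/- arXiv:2306.10497 — 7 statements merged into one kernel-verified Lean document; each statement's English description precedes it below -/
import Mathlib

section
/- Let {a_n} be the (4,1)-recurrent sequence with a_0 = a_1 = 1. Then for all n ≥ k ≥ 0, a_{n+1} - a_n = a_{k+1}·a_{n-k+1} - a_k·a_{n-k}. -/
def seqA : ℕ → ℤ
  | 0 => 1
  | 1 => 1
  | n + 2 => 4 * seqA (n + 1) - seqA n

def seqS : ℕ → ℤ
  | 0 => 0
  | 1 => 1
  | n + 2 => 4 * seqS (n + 1) - seqS n

theorem stmt_2 : ∀ n k : ℕ, k ≤ n →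
    seqA (n + 1) - seqA n = seqA (k + 1) * seqA (n - k + 1) - seqA k * seqA (n - k) := by
  intro n k
  induction k with
  | zero => intro _; simp [seqA]
  | succ k ih =>
    intro h
    have hk : k ≤ n := Nat.le_of_succ_le h
    have ihk := ih hk
    obtain ⟨m, hm⟩ : ∃ m, n - k = m + 1 := ⟨n - k - 1, by omega⟩
    have h1 : n - (k + 1) = m := by omega
    have h2 : n - k + 1 = m + 2 := by omega
    rw [hm] at ihk
    rw [h1, ihk]
    have e1 : seqA (m + 1 + 1) = 4 * seqA (m + 1) - seqA m := rfl
    have e2 : seqA (k + 1 + 1) = 4 * seqA (k + 1) - seqA k := rfl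
    rw [e1, e2]; ring
end

section
/- Let {a_n} be the (4,1)-recurrent sequence with a_0 = a_1 = 1. Then for all n ≥ 0, (a_{n+1} + a_n)² = 3(a_{n+1} - a_n)² + 4. -/
lemma aux : ∀ n : ℕ, seqA (n+1) ^ 2 - 4 * seqA (n+1) * seqA n + seqA n ^ 2 = -2 := by
  intro n
  induction n with
  | zero => simp [seqA]
  | succ k ih =>
    have h : seqA (k+2) = 4 * seqA (k+1) - seqA k := rfl
    rw [h]; nlinarith [ih]

theorem stmt_4 : ∀ n : ℕ,
    (seqA (n + 1) + seqA n) ^ 2 = 3 * (seqA (n + 1) - seqA n) ^ 2 + 4 := by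
  intro n
  have := aux n
  nlinarith [this]
end

section
/- Let {a_n} and {s_n} be the (4,1)-recurrent sequences with a_0 = a_1 = 1 and s_0 = 0, s_1 = 1. Then for all n ≥ 1, 6·Σ_{i=1}^{n} a_i·a_{n+1-i} = n(a_{n+1} + a_n) + (a_{n+1} - a_n), equivalently 3·Σ_{i=1}^{n} a_i·a_{n+1-i} = (n+1)s_n + n·a_n. -/
def Tconv (n : ℕ) : ℤ := ∑ i ∈ Finset.Icc 1 n, seqA i * seqA (n + 1 - i)

lemma diffAS : ∀ n, seqA (n + 1) = seqA n + 2 * seqS n := by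
  have key : ∀ n, seqA (n + 1) = seqA n + 2 * seqS n ∧
      seqA (n + 2) = seqA (n + 1) + 2 * seqS (n + 1) := by
    intro n
    induction n with
    | zero => norm_num [seqA, seqS]
    | succ k ih =>
      refine ⟨ih.2, ?_⟩
      have h1 := ih.1
      have h2 := ih.2
      have hA : seqA (k + 3) = 4 * seqA (k + 2) - seqA (k + 1) := rfl
      have hA2 : seqA (k + 2) = 4 * seqA (k + 1) - seqA k := rfl
      have hS : seqS (k + 2) = 4 * seqS (k + 1) - seqS k := rfl
      show seqA (k + 3) = seqA (k + 2) + 2 * seqS (k + 2)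
      linarith
  exact fun n => (key n).1

lemma tconv_rec (n : ℕ) :
    Tconv (n + 2) = 4 * Tconv (n + 1) - Tconv n - seqA (n + 1) + seqA (n + 2) := by
  have h1 : Tconv (n + 2)
      = ∑ i ∈ Finset.Icc 1 (n + 1), seqA i * seqA (n + 2 + 1 - i)
        + seqA (n + 2) * seqA (n + 2 + 1 - (n + 2)) := by
    unfold Tconv
    exact Finset.sum_Icc_succ_top (by omega) _
  have h2 : ∑ i ∈ Finset.Icc 1 (n + 1), seqA i * seqA (n + 2 + 1 - i)
      = ∑ i ∈ Finset.Icc 1 (n + 1),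
          (4 * (seqA i * seqA (n + 1 + 1 - i)) - seqA i * seqA (n + 1 - i)) := by
    apply Finset.sum_congr rfl
    intro i hi
    simp only [Finset.mem_Icc] at hi
    have e1 : n + 2 + 1 - i = (n + 1 - i) + 2 := by omega
    have e2 : n + 1 + 1 - i = (n + 1 - i) + 1 := by omega
    rw [e1, e2]
    have : seqA (n + 1 - i + 2) = 4 * seqA (n + 1 - i + 1) - seqA (n + 1 - i) := rfl
    rw [this]
    ring
  have h3 : ∑ i ∈ Finset.Icc 1 (n + 1), seqA i * seqA (n + 1 + 1 - i) = Tconv (n + 1) := rfl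
  have h4 : ∑ i ∈ Finset.Icc 1 (n + 1), seqA i * seqA (n + 1 - i)
      = Tconv n + seqA (n + 1) * seqA 0 := by
    unfold Tconv
    rw [Finset.sum_Icc_succ_top (by omega)]
    norm_num
  have hA0 : seqA 0 = 1 := rfl
  have hA1 : seqA 1 = 1 := rfl
  have e : n + 2 + 1 - (n + 2) = 1 := by omega
  rw [h1, h2, Finset.sum_sub_distrib, ← Finset.mul_sum, h3, h4, e, hA0, hA1]
  ring

lemma main_lemma : ∀ n, 3 * Tconv n = ((n : ℤ) + 1) * seqS n + (n : ℤ) * seqA n := by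
  have key : ∀ n, (3 * Tconv n = ((n : ℤ) + 1) * seqS n + (n : ℤ) * seqA n) ∧
      (3 * Tconv (n + 1) = ((n : ℤ) + 2) * seqS (n + 1) + ((n : ℤ) + 1) * seqA (n + 1)) := by
    intro n
    induction n with
    | zero =>
      constructor
      · norm_num [Tconv, seqA, seqS]
      · norm_num [Tconv, seqA, seqS]
    | succ k ih =>
      have ih1 := ih.1
      have ih2 := ih.2
      refine ⟨by push_cast; linarith, ?_⟩
      have hrec := tconv_rec k
      have hA : seqA (k + 2) = 4 * seqA (k + 1) - seqA k := rfl
      have hS : seqS (k + 2) = 4 * seqS (k + 1) - seqS k := rfl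
      have hd1 := diffAS k
      have hd2 := diffAS (k + 1)
      push_cast
      push_cast at ih1 ih2
      linear_combination 3 * hrec + 4 * ih2 - ih1 - ((k : ℤ) + 3) * hS
        - ((k : ℤ) + 1) * hA + 2 * hd2 - hd1
  exact fun n => (key n).1

theorem stmt_5 : ∀ n : ℕ, 1 ≤ n →
    6 * ∑ i ∈ Finset.Icc 1 n, seqA i * seqA (n + 1 - i)
      = (n : ℤ) * (seqA (n + 1) + seqA n) + (seqA (n + 1) - seqA n) ∧
    3 * ∑ i ∈ Finset.Icc 1 n, seqA i * seqA (n + 1 - i)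
      = ((n : ℤ) + 1) * seqS n + (n : ℤ) * seqA n := by
  intro n _
  have h := main_lemma n
  have hd := diffAS n
  unfold Tconv at h
  exact ⟨by linear_combination 2 * h - ((n : ℤ) + 1) * hd, h⟩
end

section
/- Let {a_n} be the (4,1)-recurrent sequence with a_0 = a_1 = 1, and define b_n = Σ_{i=1}^{n} a_i·a_{n+1-i}. Then for all n ≥ 4, b_n - 4b_{n-1} + b_{n-2} = a_n - a_{n-1}. -/
def seqB (n : ℕ) : ℤ := ∑ i ∈ Finset.Icc 1 n, seqA i * seqA (n + 1 - i)

lemma seqB_range (n : ℕ) :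
    seqB n = ∑ i ∈ Finset.range n, seqA (i + 1) * seqA (n - i) := by
  unfold seqB
  rw [show Finset.Icc 1 n = Finset.Ico 1 (n + 1) by rfl, Finset.sum_Ico_eq_sum_range]
  apply Finset.sum_congr (by congr 1)
  intro i _
  congr 2 <;> omega

lemma key (n : ℕ) :
    seqB (n + 2) - 4 * seqB (n + 1) + seqB n = seqA (n + 2) - seqA (n + 1) := by
  have hB2 := seqB_range (n + 2)
  have hB1 := seqB_range (n + 1)
  have hB0 := seqB_range n
  rw [Finset.sum_range_succ, Finset.sum_range_succ] at hB2
  rw [Finset.sum_range_succ] at hB1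
  have e1 : ∑ i ∈ Finset.range n, seqA (i + 1) * seqA (n + 2 - i)
      = 4 * (∑ i ∈ Finset.range n, seqA (i + 1) * seqA (n + 1 - i))
        - ∑ i ∈ Finset.range n, seqA (i + 1) * seqA (n - i) := by
    rw [Finset.mul_sum, ← Finset.sum_sub_distrib]
    apply Finset.sum_congr rfl
    intro i hi
    simp only [Finset.mem_range] at hi
    have h1 : n + 2 - i = (n - i) + 2 := by omega
    have h2 : n + 1 - i = (n - i) + 1 := by omega
    rw [h1, h2, show seqA (n - i + 2) = 4 * seqA (n - i + 1) - seqA (n - i) from rfl]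
    ring
  have h3 : n + 2 - n = 2 := by omega
  have h4 : n + 2 - (n + 1) = 1 := by omega
  have h5 : n + 1 - n = 1 := by omega
  rw [e1, h3, h4] at hB2
  rw [h5] at hB1
  have hA2 : seqA 2 = 3 := by norm_num [seqA]
  have hA1 : seqA 1 = 1 := rfl
  rw [hB2, hB1, hB0, hA2, hA1, show seqA (n + 1 + 1) = seqA (n + 2) from rfl]
  ring

theorem stmt_8 : ∀ n : ℕ, 4 ≤ n →
    seqB n - 4 * seqB (n - 1) + seqB (n - 2) = seqA n - seqA (n - 1) := by
  intro n hn
  obtain ⟨m, rfl⟩ : ∃ m, n = m + 2 := ⟨n - 2, by omega⟩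
  simpa using key m
end

section
/- Let {a_n} and {s_n} be the (4,1)-recurrent sequences with a_0 = a_1 = 1, s_0 = 0, s_1 = 1, and define b_n = Σ_{i=1}^{n} a_i·a_{n+1-i}. Then for all n ≥ 2, b_n + b_{n-1} = n·a_n + s_{n-1}. -/
lemma seqB_rec (n : ℕ) :
    seqB (n+2) = 4 * seqB (n+1) - seqB n + seqA (n+2) - seqA (n+1) := by
  unfold seqB
  rw [show (n+2) = (n+1)+1 from rfl, Finset.sum_Icc_succ_top (by omega),
      Finset.sum_Icc_succ_top (by omega : (1:ℕ) ≤ n+1),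
      Finset.sum_Icc_succ_top (by omega : (1:ℕ) ≤ n+1)]
  have h1 : ∑ i ∈ Finset.Icc 1 n, seqA i * seqA (n + 1 + 1 + 1 - i)
      = ∑ i ∈ Finset.Icc 1 n, (4 * (seqA i * seqA (n + 1 + 1 - i)) - seqA i * seqA (n + 1 - i)) := by
    apply Finset.sum_congr rfl
    intro i hi
    simp only [Finset.mem_Icc] at hi
    have e1 : n + 1 + 1 + 1 - i = (n + 1 - i) + 2 := by omega
    have e2 : n + 1 + 1 - i = (n + 1 - i) + 1 := by omega
    rw [e1, e2, show seqA ((n+1-i)+2) = 4 * seqA ((n+1-i)+1) - seqA (n+1-i) from rfl]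
    ring
  rw [h1, Finset.sum_sub_distrib]
  rw [← Finset.mul_sum]
  have hA1 : seqA 1 = 1 := rfl
  have hA2 : seqA 2 = 3 := by norm_num [seqA]
  simp only [Nat.add_sub_cancel, show n+1+1-(n+1) = 1 from by omega, show n+1+1+1-(n+1) = 2 from by omega, show n+1+1+1-(n+1+1) = 1 from by omega]
  rw [hA1, hA2]
  ring

lemma main_aux : ∀ n : ℕ, seqB (n+2) + seqB (n+1) = ((n:ℤ)+2) * seqA (n+2) + seqS (n+1) := by
  intro n
  induction n using Nat.twoStepInduction with
  | zero => decide
  | one => decide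
  | more n ih0 ih1 =>
    have r0 := seqB_rec n
    have r1 := seqB_rec (n+1)
    have r2 := seqB_rec (n+2)
    have hA2 : seqA (n+2) = 4 * seqA (n+1) - seqA n := rfl
    have hA3 : seqA (n+3) = 4 * seqA (n+2) - seqA (n+1) := rfl
    have hA4 : seqA (n+4) = 4 * seqA (n+3) - seqA (n+2) := rfl
    have hS2 : seqS (n+2) = 4 * seqS (n+1) - seqS n := rfl
    have hS3 : seqS (n+3) = 4 * seqS (n+2) - seqS (n+1) := rfl
    simp only [show n+1+2 = n+3 from rfl, show n+2+2 = n+4 from rfl,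
      show n+1+1 = n+2 from rfl, show n+2+1 = n+3 from rfl] at r1 r2 ih1 ⊢
    push_cast
    push_cast at ih0 ih1
    linear_combination 4 * ih1 - ih0 + r2 + r1 - ((n:ℤ)+3) * hA4 - hS3

theorem stmt_10 : ∀ n : ℕ, 2 ≤ n →
    seqB n + seqB (n - 1) = (n : ℤ) * seqA n + seqS (n - 1) := by
  intro n hn
  obtain ⟨m, rfl⟩ : ∃ m, n = m + 2 := ⟨n - 2, by omega⟩
  have := main_aux m
  simpa [show m + 2 - 1 = m + 1 from by omega] using this
end

section
/- Let {a_n} and {s_n} be the (4,1)-recurrent sequences with a_0 = a_1 = 1, s_0 = 0, s_1 = 1. Then for all n ≥ 1, 2·Σ_{i=1}^{n} a_i·s_{n+1-i} = n·s_n + Σ_{i=1}^{n} a_i·a_{n+1-i}. -/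
/-!
Both sums are Cauchy products of solutions of the recurrence, and the Cauchy product of any
sequence with a solution of `x (n + 2) = p * x (n + 1) - q * x n` satisfies the same recurrence
up to two boundary terms. Hence the difference of the two sides of the identity obeys the
recurrence with a forcing term that vanishes because `a (n + 1) = s (n + 1) - s n`; as it
vanishes for the first two indices, it vanishes identically.
-/

open Finset

section CauchyProduct

variable {R : Type*} [CommRing R]

def cauchyProduct (u v : ℕ → R) (n : ℕ) : R :=
  ∑ ij ∈ antidiagonal n, u ij.1 * v ij.2

theorem cauchyProduct_succ_eq (u v : ℕ → R) (n : ℕ) :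
    cauchyProduct u v (n + 1)
      = u 0 * v (n + 1) + ∑ i ∈ Icc 1 n, u i * v (n + 1 - i) + u (n + 1) * v 0 := by
  rw [cauchyProduct, Nat.sum_antidiagonal_eq_sum_range_succ (fun i j ↦ u i * v j),
    sum_range_eq_add_Ico _ (Nat.succ_pos _), sum_Ico_succ_top (by omega),
    Ico_add_one_right_eq_Icc, Nat.sub_zero, Nat.sub_self, add_assoc]

theorem cauchyProduct_add_two {u v : ℕ → R} {p q : R}
    (hv : ∀ n, v (n + 2) = p * v (n + 1) - q * v n) (n : ℕ) :
    cauchyProduct u v (n + 2)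
      = p * cauchyProduct u v (n + 1) - q * cauchyProduct u v n
        + u (n + 1) * (v 1 - p * v 0) + u (n + 2) * v 0 := by
  have shift₁ : cauchyProduct u v (n + 1)
      = u (n + 1) * v 0 + ∑ x ∈ antidiagonal n, u x.1 * v (x.2 + 1) :=
    Nat.sum_antidiagonal_succ'
  have shift₂ : cauchyProduct u v (n + 2)
      = u (n + 2) * v 0 + (u (n + 1) * v 1 + ∑ x ∈ antidiagonal n, u x.1 * v (x.2 + 2)) := by
    rw [cauchyProduct, Nat.sum_antidiagonal_succ', Nat.sum_antidiagonal_succ']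
  have hsum : ∑ x ∈ antidiagonal n, u x.1 * v (x.2 + 2)
      = p * ∑ x ∈ antidiagonal n, u x.1 * v (x.2 + 1) - q * cauchyProduct u v n := by
    simp only [hv, cauchyProduct, mul_sum, ← sum_sub_distrib]
    exact sum_congr rfl fun _ _ ↦ by ring
  rw [shift₂, hsum, shift₁]
  ring

end CauchyProduct

theorem seqS_add_two (n : ℕ) : seqS (n + 2) = 4 * seqS (n + 1) - 1 * seqS n := by
  rw [one_mul, seqS]

theorem seqA_add_two (n : ℕ) : seqA (n + 2) = 4 * seqA (n + 1) - 1 * seqA n := by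
  rw [one_mul, seqA]

theorem seqA_succ (n : ℕ) : seqA (n + 1) = seqS (n + 1) - seqS n := by
  induction n using Nat.twoStepInduction with
  | zero => rfl
  | one => rfl
  | more n ih₁ ih₂ =>
    rw [seqA_add_two, seqS_add_two (n + 1), ih₁, ih₂, seqS_add_two n]
    ring

theorem two_mul_cauchyProduct_seqA_seqS (m : ℕ) :
    2 * cauchyProduct seqA seqS (m + 1) - 2 * seqS (m + 1)
      = m * seqS m + cauchyProduct seqA seqA (m + 1) - 2 * seqA (m + 1) := by
  induction m using Nat.twoStepInduction with
  | zero => rfl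
  | one => rfl
  | more m ih₁ ih₂ =>
    have forcing : seqA (m + 2) + seqA (m + 1) = 2 * seqS (m + 2) - 4 * seqS (m + 1) := by
      linear_combination seqA_succ (m + 1) + seqA_succ m - seqS_add_two m
    rw [cauchyProduct_add_two seqS_add_two, cauchyProduct_add_two seqA_add_two]
    simp only [seqA.eq_1, seqA.eq_2, seqS.eq_1, seqS.eq_2]
    push_cast at ih₂ ⊢
    linear_combination 4 * ih₂ - ih₁ - 2 * seqS_add_two (m + 1) - (m : ℤ) * seqS_add_two m
      + seqA_add_two (m + 1) + forcing

theorem stmt_11 : ∀ n : ℕ, 1 ≤ n →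
    2 * ∑ i ∈ Finset.Icc 1 n, seqA i * seqS (n + 1 - i)
      = (n : ℤ) * seqS n + ∑ i ∈ Finset.Icc 1 n, seqA i * seqA (n + 1 - i) := by
  intro n _
  have h := two_mul_cauchyProduct_seqA_seqS n
  rw [cauchyProduct_succ_eq, cauchyProduct_succ_eq] at h
  simp only [seqA.eq_1, seqS.eq_1] at h
  linear_combination h
end

section
/- Let {a_n} and {s_n} be the (4,1)-recurrent sequences with a_0 = a_1 = 1, s_0 = 0, s_1 = 1. If n = 2k+1 is odd (k ≥ 0), then (a_{n+1} + a_n - 2)/(a_{n+1} - a_n) = (s_{k+1} + s_k)/(s_{k+1} - s_k). -/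
lemma seqA_rec (n : ℕ) : seqA (n + 2) = 4 * seqA (n + 1) - seqA n := rfl
lemma seqS_rec (n : ℕ) : seqS (n + 2) = 4 * seqS (n + 1) - seqS n := rfl

lemma seqS_inv : ∀ k : ℕ,
    seqS (k+1)^2 - 4 * seqS (k+1) * seqS k + seqS k ^ 2 = 1 := by
  intro k
  induction k with
  | zero => simp [seqS]
  | succ n ih =>
      rw [seqS_rec]
      nlinarith [ih]

lemma seqS_pos : ∀ k : ℕ, 0 < seqS (k+1) - seqS k ∧ 0 ≤ seqS k := by
  intro k
  induction k with
  | zero => simp [seqS]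
  | succ n ih =>
      rw [seqS_rec]
      constructor <;> nlinarith [ih.1, ih.2]

lemma seqA_main : ∀ k : ℕ,
    seqA (2*k+2) + seqA (2*k+1) - 2 = 2 * (seqS (k+1) + seqS k)^2 ∧
    seqA (2*k+2) - seqA (2*k+1) = 2 * (seqS (k+1) + seqS k) * (seqS (k+1) - seqS k) := by
  intro k
  induction k with
  | zero => norm_num [seqA, seqS]
  | succ n ih =>
      have h1 : 2*(n+1)+2 = (2*n+2) + 2 := by ring
      have h2 : 2*(n+1)+1 = (2*n+1) + 2 := by ring
      have hinv := seqS_inv n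
      rw [seqA_rec (2*n)] at ih
      rw [h1, h2, seqA_rec, seqA_rec, seqA_rec, seqS_rec]
      refine ⟨?_, ?_⟩
      · linear_combination 7*ih.1 + 12*ih.2 + (-12)*hinv
      · linear_combination 4*ih.1 + 7*ih.2 + (-8)*hinv

theorem stmt_13 : ∀ k : ℕ, ∀ n : ℕ, n = 2 * k + 1 →
    ((seqA (n + 1) + seqA n - 2 : ℚ)) / ((seqA (n + 1) - seqA n : ℤ) : ℚ)
      = ((seqS (k + 1) + seqS k : ℤ) : ℚ) / ((seqS (k + 1) - seqS k : ℤ) : ℚ) := by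
  intro k n hn
  subst hn
  obtain ⟨h1, h2⟩ := seqA_main k
  obtain ⟨hv, hs⟩ := seqS_pos k
  have hu : 0 < seqS (k+1) + seqS k := by linarith
  have hvQ : ((seqS (k+1) - seqS k : ℤ) : ℚ) ≠ 0 := by
    exact_mod_cast hv.ne'
  have huQ : ((seqS (k+1) + seqS k : ℤ) : ℚ) ≠ 0 := by
    exact_mod_cast hu.ne'
  have key : (seqA (2*k+1+1) + seqA (2*k+1) - 2) * (seqS (k+1) - seqS k)
      = (seqS (k+1) + seqS k) * (seqA (2*k+1+1) - seqA (2*k+1)) := by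
    have h1' : seqA (2*k+1+1) + seqA (2*k+1) - 2 = 2 * (seqS (k+1) + seqS k)^2 := by
      rw [show 2*k+1+1 = 2*k+2 from rfl]; exact h1
    have h2' : seqA (2*k+1+1) - seqA (2*k+1) = 2 * (seqS (k+1) + seqS k) * (seqS (k+1) - seqS k) := by
      rw [show 2*k+1+1 = 2*k+2 from rfl]; exact h2
    linear_combination (seqS (k+1) - seqS k) * h1' - (seqS (k+1) + seqS k) * h2'
  have hq : ((seqA (2*k+1+1) - seqA (2*k+1) : ℤ) : ℚ) ≠ 0 := by
    have : (0:ℤ) < seqA (2*k+1+1) - seqA (2*k+1) := by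
      rw [show 2*k+1+1 = 2*k+2 from rfl, h2]; positivity
    exact_mod_cast this.ne'
  rw [div_eq_div_iff hq hvQ]
  push_cast
  exact_mod_cast key
end
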